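/- arXiv:1801.07837 — 2 statements merged into one kernel-verified Lean document; each statement's English description precedes it below -/
import Mathlib

section
/- For any N points z_1,…,z_N on S¹, the L² quadrant discrepancy satisfies ∫_{S¹} |(1/N)∑_{i=1}^N 𝟙_{Q(x)}(z_i) − 1/2|² dσ(x) = 1/4 − (1/π)·(1/N²)∑_{i,j=1}^N arccos|z_i·z_j|. -/
/-!
Write `x = (cos θ, sin θ)` and `z = (cos a, sin a)`; then `z ∈ Q(x)` iff `cos 2(θ - a) > 0`.
Expanding the square reduces the discrepancy to the pair measures `σ{x : z_i, z_j ∈ Q(x)}`.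
As a set of angles `θ` this is `π`-periodic, and over one period it is the overlap of two
arcs of length `π/2` whose centres are `|d|` apart, where `d ≡ a_i - a_j (mod π)` is taken in
`(-π/2, π/2]`. Its length `π/2 - |d|` equals `π/2 - arccos |z_i · z_j|`, so the pair measure is
`1/2 - arccos |z_i · z_j| / π`; for `i = j` this is `σ{x : z_i ∈ Q(x)} = 1/2`.
-/

open RealInnerProductSpace MeasureTheory

/-- The normalized arc-length (uniform) probability measure on the unit circle
`S¹ ⊂ ℝ²`, as the pushforward of normalized Lebesgue measure on `[0, 2π)` under
`θ ↦ (cos θ, sin θ)`. -/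
noncomputable def circleUnif : Measure (EuclideanSpace ℝ (Fin 2)) :=
  Measure.map (fun θ : ℝ => (WithLp.toLp 2 ![Real.cos θ, Real.sin θ] : EuclideanSpace ℝ (Fin 2)))
    (ENNReal.ofReal (2 * Real.pi)⁻¹ • volume.restrict (Set.Ico 0 (2 * Real.pi)))

/-- The antipodal quadrants in the direction `x`. -/
def quad (x : EuclideanSpace ℝ (Fin 2)) : Set (EuclideanSpace ℝ (Fin 2)) :=
  {w | |⟪x, w⟫| > Real.sqrt 2 / 2}

open Real Set

lemma integral_sq_mul_sum_sub_const {ι α : Type*} [Fintype ι] [MeasurableSpace α] {μ : Measure α}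
    [IsProbabilityMeasure μ] {f : ι → α → ℝ} (hf : ∀ i, MemLp (f i) 2 μ) (a c : ℝ) :
    ∫ x, (a * ∑ i, f i x - c) ^ 2 ∂μ =
      a ^ 2 * ∑ i, ∑ j, ∫ x, f i x * f j x ∂μ - 2 * a * c * ∑ i, ∫ x, f i x ∂μ + c ^ 2 := by
  have hint (i : ι) : Integrable (f i) μ := (hf i).integrable one_le_two
  have hmul (i j : ι) : Integrable (fun x => f i x * f j x) μ := (hf i).integrable_mul (hf j)
  have hexpand (x : α) : (a * ∑ i, f i x - c) ^ 2 =
      a ^ 2 * ∑ i, ∑ j, f i x * f j x - 2 * a * c * ∑ i, f i x + c ^ 2 := by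
    rw [← Finset.sum_mul_sum]; ring
  have hsum₂ : Integrable (fun x => ∑ i, ∑ j, f i x * f j x) μ :=
    integrable_finsetSum _ fun i _ => integrable_finsetSum _ fun j _ => hmul i j
  have hsum₁ : Integrable (fun x => ∑ i, f i x) μ := integrable_finsetSum _ fun i _ => hint i
  simp_rw [hexpand]
  rw [integral_add (f := fun x => _ - _) ((hsum₂.const_mul _).sub (hsum₁.const_mul _))
      (integrable_const _),
    integral_sub (hsum₂.const_mul _) (hsum₁.const_mul _), integral_const_mul, integral_const_mul,
    integral_finsetSum _ fun i _ => integrable_finsetSum _ fun j _ => hmul i j,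
    integral_finsetSum _ fun i _ => hint i]
  simp_rw [integral_finsetSum _ fun j _ => hmul _ j]
  simp

noncomputable def circ (θ : ℝ) : EuclideanSpace ℝ (Fin 2) := WithLp.toLp 2 ![cos θ, sin θ]

lemma continuous_circ : Continuous circ :=
  (PiLp.continuous_toLp 2 _).comp (continuous_pi fun i => by fin_cases i <;> fun_prop)

lemma inner_circ_circ (θ a : ℝ) : ⟪circ θ, circ a⟫ = cos (θ - a) := by
  simp only [circ, PiLp.inner_apply, RCLike.inner_apply, conj_trivial, Fin.sum_univ_two,
    Matrix.cons_val_zero, Matrix.cons_val_one, cos_sub]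
  ring

lemma exists_eq_circ {u : EuclideanSpace ℝ (Fin 2)} (hu : ‖u‖ = 1) : ∃ a, u = circ a := by
  set w := Complex.orthonormalBasisOneI.repr.symm u
  obtain ⟨a, ha⟩ := (Complex.norm_eq_one_iff w).1 (by rw [LinearIsometryEquiv.norm_map, hu])
  refine ⟨a, ?_⟩
  rw [← Complex.orthonormalBasisOneI.repr.apply_symm_apply u]
  ext i
  fin_cases i <;> simp [circ, ← ha, w]

lemma circleUnif_eq :
    circleUnif = (ENNReal.ofReal (2 * π)⁻¹ • volume.restrict (Ico 0 (2 * π))).map circ := rfl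

instance isProbabilityMeasure_circleUnif : IsProbabilityMeasure circleUnif := by
  rw [circleUnif_eq]
  refine @Measure.isProbabilityMeasure_map _ _ _ _ _ ⟨?_⟩ _ continuous_circ.aemeasurable
  rw [Measure.smul_apply, Measure.restrict_apply_univ, Real.volume_Ico, smul_eq_mul,
    ← ENNReal.ofReal_mul (by positivity), sub_zero, inv_mul_cancel₀ (by positivity),
    ENNReal.ofReal_one]

lemma integral_circleUnif {g : EuclideanSpace ℝ (Fin 2) → ℝ} (hg : Measurable g) :
    ∫ x, g x ∂circleUnif = (2 * π)⁻¹ * ∫ θ in 0..2 * π, g (circ θ) := by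
  rw [circleUnif_eq, integral_map continuous_circ.aemeasurable hg.aestronglyMeasurable,
    integral_smul_measure, ENNReal.toReal_ofReal (by positivity), smul_eq_mul,
    intervalIntegral.integral_of_le (by positivity), setIntegral_congr_set Ico_ae_eq_Ioc]

lemma cos_pos_iff_abs_lt {x : ℝ} (hx : |x| ≤ 3 * π / 2) : 0 < cos x ↔ |x| < π / 2 := by
  refine ⟨fun h => ?_, fun h => cos_pos_of_mem_Ioo (abs_lt.1 h)⟩
  by_contra! h'
  have := cos_nonpos_of_pi_div_two_le_of_le h' (by linarith)
  rw [cos_abs] at this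
  linarith

/-- `t ∈ quadPair d` iff `circ 0` and `circ (-d)` both lie in `quad (circ t)`. -/
def quadPair (d : ℝ) : Set ℝ := {t | 0 < cos (2 * t) ∧ 0 < cos (2 * t + 2 * d)}

lemma isOpen_quadPair (d : ℝ) : IsOpen (quadPair d) :=
  (isOpen_lt continuous_const (by fun_prop : Continuous fun t => cos (2 * t))).inter
    (isOpen_lt continuous_const (by fun_prop : Continuous fun t => cos (2 * t + 2 * d)))

lemma periodic_indicator_quadPair (d : ℝ) :
    Function.Periodic ((quadPair d).indicator (1 : ℝ → ℝ)) π := by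
  intro t
  simp only [indicator_apply, quadPair, mem_ofPred_eq, Pi.one_apply,
    show 2 * (t + π) = 2 * t + 2 * π by ring, cos_add_two_pi, add_right_comm _ (2 * π)]

lemma Ioc_inter_quadPair {d : ℝ} (hd : |d| ≤ π / 2) :
    Ioc (-(π / 4)) (-(π / 4) + π) ∩ quadPair d =
      Ioo (-(π / 4)) (π / 4) ∩ Ioo (-d - π / 4) (-d + π / 4) := by
  have hπ := pi_pos
  obtain ⟨hd₁, hd₂⟩ := abs_le.1 hd
  ext t
  simp only [mem_inter_iff, mem_Ioc, mem_Ioo, quadPair, mem_ofPred_eq]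
  constructor
  · rintro ⟨⟨ht₁, ht₂⟩, h₁, h₂⟩
    obtain ⟨ht₃, ht₄⟩ := abs_lt.1 <|
      (cos_pos_iff_abs_lt (abs_le.2 ⟨by linarith, by linarith⟩)).1 h₁
    obtain ⟨ht₅, ht₆⟩ := abs_lt.1 <|
      (cos_pos_iff_abs_lt (abs_le.2 ⟨by linarith, by linarith⟩)).1 h₂
    exact ⟨⟨by linarith, by linarith⟩, by linarith, by linarith⟩
  · rintro ⟨⟨ht₁, ht₂⟩, ht₃, ht₄⟩
    exact ⟨⟨ht₁, by linarith⟩, cos_pos_of_mem_Ioo ⟨by linarith, by linarith⟩,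
      cos_pos_of_mem_Ioo ⟨by linarith, by linarith⟩⟩

lemma volume_real_Ioc_inter_quadPair {d : ℝ} (hd : |d| ≤ π / 2) :
    volume.real (Ioc (-(π / 4)) (-(π / 4) + π) ∩ quadPair d) = π / 2 - |d| := by
  rw [Ioc_inter_quadPair hd, Ioo_inter_Ioo, Real.volume_real_Ioo_of_le]
  · rcases le_total d 0 with h | h
    · rw [abs_of_nonpos h, min_eq_left (by linarith), max_eq_right (by linarith)]; ring
    · rw [abs_of_nonneg h, min_eq_right (by linarith), max_eq_left (by linarith)]; ring
  · obtain ⟨hd₁, hd₂⟩ := abs_le.1 hd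
    exact max_le (le_min (by linarith [pi_pos]) (by linarith)) (le_min (by linarith) (by linarith))

lemma integral_indicator_quadPair_comp_sub {d : ℝ} (hd : |d| ≤ π / 2) (a : ℝ) :
    ∫ θ in 0..2 * π, (quadPair d).indicator 1 (θ - a) = π - 2 * |d| := by
  set F := (quadPair d).indicator (1 : ℝ → ℝ)
  have hmeas := (isOpen_quadPair d).measurableSet
  have hint (t₁ t₂ : ℝ) : IntervalIntegrable F volume t₁ t₂ :=
    ⟨(integrableOn_const measure_Ioc_lt_top.ne).indicator hmeas,
      (integrableOn_const measure_Ioc_lt_top.ne).indicator hmeas⟩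
  have hper : F.Periodic π := periodic_indicator_quadPair d
  calc ∫ θ in 0..2 * π, F (θ - a)
      = ∫ t in -a..-a + (2 : ℤ) • π, F t := by
        rw [intervalIntegral.integral_comp_sub_right, two_zsmul]; ring_nf
    _ = 2 * ∫ t in -(π / 4)..-(π / 4) + π, F t := by
        rw [hper.intervalIntegral_add_zsmul_eq 2 _ hint,
          hper.intervalIntegral_add_eq (-a) (-(π / 4)), zsmul_eq_mul, Int.cast_ofNat]
    _ = 2 * volume.real (Ioc (-(π / 4)) (-(π / 4) + π) ∩ quadPair d) := by
        rw [intervalIntegral.integral_of_le (by linarith [pi_pos]), integral_indicator_one hmeas,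
          measureReal_restrict_apply hmeas, inter_comm]
    _ = π - 2 * |d| := by
        rw [volume_real_Ioc_inter_quadPair hd]; ring

lemma circ_mem_quad_circ_iff (θ a : ℝ) : circ a ∈ quad (circ θ) ↔ 0 < cos (2 * (θ - a)) := by
  have h2 : √2 / 2 = √(1 / 2) := by
    rw [show (1 : ℝ) / 2 = 2 / 2 ^ 2 by norm_num, sqrt_div' _ (by norm_num), sqrt_sq (by norm_num)]
  change √2 / 2 < |⟪circ θ, circ a⟫| ↔ _
  rw [inner_circ_circ, h2, ← sqrt_sq_eq_abs, sqrt_lt_sqrt_iff (by norm_num), cos_two_mul]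
  constructor <;> intro h <;> linarith

lemma indicator_quad_circ (θ a : ℝ) :
    (quad (circ θ)).indicator (fun _ => (1 : ℝ)) (circ a) =
      if 0 < cos (2 * (θ - a)) then 1 else 0 := by
  classical
  simp only [Set.indicator_apply, circ_mem_quad_circ_iff]

lemma integral_indicator_quad_circ_mul (a b : ℝ) :
    ∫ θ in 0..2 * π, (quad (circ θ)).indicator (fun _ => (1 : ℝ)) (circ a) *
      (quad (circ θ)).indicator (fun _ => 1) (circ b) = π - 2 * arccos |cos (a - b)| := by
  have hk := self_sub_toIocMod_eq_mul pi_pos (-(π / 2)) (a - b)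
  set d := toIocMod pi_pos (-(π / 2)) (a - b)
  set k := toIocDiv pi_pos (-(π / 2)) (a - b)
  obtain ⟨hd₁, hd₂⟩ : d ∈ Ioc (-(π / 2)) (-(π / 2) + π) := toIocMod_mem_Ioc _ _ _
  have hd : |d| ≤ π / 2 := abs_le.2 ⟨hd₁.le, by linarith⟩
  have hintegrand (θ : ℝ) : (quad (circ θ)).indicator (fun _ => (1 : ℝ)) (circ a) *
      (quad (circ θ)).indicator (fun _ => 1) (circ b) = (quadPair d).indicator 1 (θ - a) := by
    have : cos (2 * (θ - b)) = cos (2 * (θ - a) + 2 * d) := by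
      rw [← cos_add_int_mul_two_pi (2 * (θ - a) + 2 * d) k]; congr 1; linarith
    simp only [indicator_quad_circ, this, Set.indicator_apply, quadPair, mem_ofPred_eq,
      ite_zero_mul_ite_zero, mul_one, Pi.one_apply]
  have harccos : arccos |cos (a - b)| = |d| := by
    rw [show a - b = d + k * π by linarith, cos_add_int_mul_pi, abs_mul, abs_zpow, abs_neg, abs_one,
      one_zpow, one_mul, ← cos_abs, abs_of_nonneg (cos_nonneg_of_neg_pi_div_two_le_of_le (by
      linarith [abs_nonneg d]) hd), arccos_cos (abs_nonneg d) (by linarith [pi_pos])]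
  simp only [hintegrand, integral_indicator_quadPair_comp_sub hd, harccos]

lemma indicator_quad_eq (w : EuclideanSpace ℝ (Fin 2)) :
    (fun x => (quad x).indicator (fun _ => (1 : ℝ)) w) = {x | w ∈ quad x}.indicator 1 := by
  classical
  ext x
  simp only [Set.indicator_apply, mem_ofPred_eq, Pi.one_apply]

lemma measurableSet_setOf_mem_quad (w : EuclideanSpace ℝ (Fin 2)) :
    MeasurableSet {x | w ∈ quad x} :=
  measurableSet_lt measurable_const
    (by fun_prop : Continuous fun x : EuclideanSpace ℝ (Fin 2) => |⟪x, w⟫|).measurable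

lemma measurable_indicator_quad (w : EuclideanSpace ℝ (Fin 2)) :
    Measurable fun x => (quad x).indicator (fun _ => (1 : ℝ)) w := by
  rw [indicator_quad_eq]
  exact measurable_const.indicator (measurableSet_setOf_mem_quad w)

lemma memLp_indicator_quad (w : EuclideanSpace ℝ (Fin 2)) (p : ENNReal) :
    MemLp (fun x => (quad x).indicator (fun _ => (1 : ℝ)) w) p circleUnif := by
  rw [indicator_quad_eq]
  exact (memLp_const 1).indicator (measurableSet_setOf_mem_quad w)

lemma integral_indicator_quad_mul {u v : EuclideanSpace ℝ (Fin 2)} (hu : ‖u‖ = 1) (hv : ‖v‖ = 1) :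
    ∫ x, (quad x).indicator (fun _ => (1 : ℝ)) u * (quad x).indicator (fun _ => 1) v ∂circleUnif =
      1 / 2 - arccos |⟪u, v⟫| / π := by
  obtain ⟨a, rfl⟩ := exists_eq_circ hu
  obtain ⟨b, rfl⟩ := exists_eq_circ hv
  rw [integral_circleUnif (g := fun x => _ * _)
      ((measurable_indicator_quad _).mul (measurable_indicator_quad _)),
    integral_indicator_quad_circ_mul, inner_circ_circ]
  field_simp

lemma integral_indicator_quad {u : EuclideanSpace ℝ (Fin 2)} (hu : ‖u‖ = 1) :
    ∫ x, (quad x).indicator (fun _ => (1 : ℝ)) u ∂circleUnif = 1 / 2 := by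
  have h := integral_indicator_quad_mul hu hu
  rw [real_inner_self_eq_norm_sq, hu] at h
  classical
  simpa [Set.indicator_apply, ← ite_and] using h

theorem stmt_12_general (N : ℕ) (z : Fin N → EuclideanSpace ℝ (Fin 2))
    (hz : ∀ i, ‖z i‖ = 1) :
    ∫ x, ((1 / (N : ℝ)) * ∑ i, (quad x).indicator (fun _ => (1 : ℝ)) (z i) - 1 / 2) ^ 2 ∂circleUnif =
      1 / 4 - (1 / Real.pi) * ((1 / (N : ℝ) ^ 2) * ∑ i, ∑ j, Real.arccos |⟪z i, z j⟫|) := by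
  rw [integral_sq_mul_sum_sub_const (fun i => memLp_indicator_quad (z i) 2)]
  simp only [integral_indicator_quad_mul (hz _) (hz _), integral_indicator_quad (hz _)]
  rcases eq_or_ne (N : ℝ) 0 with hN | hN
  · norm_num [hN]
  · simp only [Finset.sum_sub_distrib, Finset.sum_const, Finset.card_univ, Fintype.card_fin,
      nsmul_eq_mul, ← Finset.sum_div]
    field_simp
    ring

theorem stmt_12 (N : ℕ) (hN : 0 < N) (z : Fin N → EuclideanSpace ℝ (Fin 2))
    (hz : ∀ i, ‖z i‖ = 1) :
    ∫ x, ((1 / (N : ℝ)) * ∑ i, (quad x).indicator (fun _ => (1 : ℝ)) (z i) - 1 / 2) ^ 2 ∂circleUnif =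
      1 / 4 - (1 / Real.pi) * ((1 / (N : ℝ) ^ 2) * ∑ i, ∑ j, Real.arccos |⟪z i, z j⟫|) :=
  stmt_12_general N z hz
end

section
/- For any Borel probability measure μ on S¹, ∫_{S¹} |μ(Q(x)) − 1/2|² dσ(x) = 1/4 − (1/π)·∬_{S¹×S¹} arccos|y·z| dμ(y)dμ(z). -/
/-!
Put `f x = μ (Q x)`. Since `w ∈ Q x ↔ x ∈ Q w`, Tonelli gives
`∫ f dσ = ∫ σ (Q y) dμ y = 1/2` and `∫ f² dσ = ∬ σ (Q y ∩ Q z) dμ dμ`, so expanding `(f - 1/2)²`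
reduces the theorem to the value of `σ (Q y ∩ Q z)` for `y = (cos α, sin α)`, `z = (cos β, sin β)`.
As `|cos u| > √2/2 ↔ cos 2u > 0`, the set of angles `θ` with `(cos θ, sin θ) ∈ Q y ∩ Q z` is
`π`-periodic; on a suitable period it is the intersection of the intervals of radius `π/4`
around `α` and around `β₀ ∈ β + πℤ` with `|α - β₀| ≤ π/2`, of length `π/2 - |α - β₀|`,
and `|α - β₀| = arccos |cos (β - α)| = arccos |⟪y, z⟫|`.
-/

open RealInnerProductSpace MeasureTheory

open Real Set
open scoped ENNReal

local notation "ℝ²" => EuclideanSpace ℝ (Fin 2)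

section MeasureSections

variable {X Y : Type*} [MeasurableSpace X] [MeasurableSpace Y]

theorem lintegral_measure_prodMk_preimage_comm {S : Set (X × Y)} (hS : MeasurableSet S)
    (ν : Measure X) (μ : Measure Y) [SFinite ν] [SFinite μ] :
    ∫⁻ x, μ (Prod.mk x ⁻¹' S) ∂ν = ∫⁻ y, ν ((·, y) ⁻¹' S) ∂μ := by
  rw [← Measure.prod_apply hS, Measure.prod_apply_symm hS]

theorem lintegral_measure_prodMk_preimage_sq {S : Set (X × Y)} (hS : MeasurableSet S)
    (ν : Measure X) (μ : Measure Y) [SFinite ν] [SFinite μ] :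
    ∫⁻ x, μ (Prod.mk x ⁻¹' S) ^ 2 ∂ν =
      ∫⁻ p : Y × Y, ν ((·, p.1) ⁻¹' S ∩ (·, p.2) ⁻¹' S) ∂(μ.prod μ) := by
  have hS₂ : MeasurableSet {q : X × Y × Y | (q.1, q.2.1) ∈ S ∧ (q.1, q.2.2) ∈ S} :=
    (measurable_fst.prodMk (measurable_fst.comp measurable_snd) hS).inter
      (measurable_fst.prodMk (measurable_snd.comp measurable_snd) hS)
  refine (lintegral_congr fun x ↦ ?_).trans
    (lintegral_measure_prodMk_preimage_comm hS₂ ν (μ.prod μ))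
  rw [sq, ← Measure.prod_prod]
  rfl

theorem integral_toReal_sub_sq {ν : Measure X} [IsProbabilityMeasure ν] {f : X → ℝ≥0∞}
    (hf : Measurable f) (hf_le : ∀ x, f x ≤ 1) (c : ℝ) :
    ∫ x, ((f x).toReal - c) ^ 2 ∂ν =
      (∫⁻ x, f x ^ 2 ∂ν).toReal - 2 * c * (∫⁻ x, f x ∂ν).toReal + c ^ 2 := by
  have hfin : ∀ᵐ x ∂ν, f x < ∞ :=
    ae_of_all _ fun x ↦ (hf_le x).trans_lt ENNReal.one_lt_top
  have hfin₂ : ∀ᵐ x ∂ν, f x ^ 2 < ∞ := hfin.mono fun x hx ↦ ENNReal.pow_lt_top hx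
  have hle : ∀ x, (f x).toReal ≤ 1 := fun x ↦ ENNReal.toReal_le_of_le_ofReal zero_le_one
    (by simpa using hf_le x)
  have hint : Integrable (fun x ↦ (f x).toReal) ν := by
    refine .of_bound hf.ennreal_toReal.aestronglyMeasurable 1 (ae_of_all _ fun x ↦ ?_)
    simpa using hle x
  have hint₂ : Integrable (fun x ↦ (f x ^ 2).toReal) ν := by
    refine .of_bound (hf.pow_const 2).ennreal_toReal.aestronglyMeasurable 1
      (ae_of_all _ fun x ↦ ?_)
    simpa using hle x
  have hexpand : ∀ x,
      ((f x).toReal - c) ^ 2 = (f x ^ 2).toReal - 2 * c * (f x).toReal + c ^ 2 := fun x ↦ by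
    rw [ENNReal.toReal_pow]; ring
  simp only [hexpand]
  rw [integral_add (f := fun x ↦ (f x ^ 2).toReal - 2 * c * (f x).toReal)
      (hint₂.sub (hint.const_mul _)) (integrable_const _),
    integral_sub hint₂ (hint.const_mul _), integral_const_mul, integral_const,
    integral_toReal (hf.pow_const 2).aemeasurable hfin₂, integral_toReal hf.aemeasurable hfin]
  simp

end MeasureSections

theorem exists_abs_sub_int_mul_le_half (x : ℝ) {p : ℝ} (hp : 0 < p) :
    ∃ k : ℤ, |x - k * p| ≤ p / 2 := by
  refine ⟨round (x / p), ?_⟩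
  have h := abs_sub_round (x / p)
  rw [show x - round (x / p) * p = (x / p - round (x / p)) * p by field_simp, abs_mul,
    abs_of_pos hp]
  nlinarith

theorem volume_inter_abs_sub_lt (a b r : ℝ) :
    volume {θ : ℝ | |θ - a| < r ∧ |θ - b| < r} = ENNReal.ofReal (2 * r - |a - b|) := by
  have h : {θ : ℝ | |θ - a| < r ∧ |θ - b| < r} =
      Ioo (max (a - r) (b - r)) (min (a + r) (b + r)) := by
    ext θ
    simp only [mem_ofPred_eq, mem_Ioo, abs_sub_lt_iff, max_lt_iff, lt_min_iff]
    constructor <;> intro h <;> refine ⟨⟨?_, ?_⟩, ?_, ?_⟩ <;> linarith [h.1, h.2]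
  rw [h, Real.volume_Ioo, min_add_add_right, max_sub_sub_right, ← max_sub_min_eq_abs']
  congr 1
  ring

theorem volume_Ico_inter_eq_of_periodic {p : ℝ} (hp : 0 < p) {A : Set ℝ} (hA : MeasurableSet A)
    (hper : Function.Periodic (· ∈ A) p) (a b : ℝ) :
    volume (Ico a (a + p) ∩ A) = volume (Ico b (b + p) ∩ A) := by
  simp only [inter_comm _ A, measure_congr ((ae_eq_refl A).inter Ico_ae_eq_Ioc)]
  refine (isAddFundamentalDomain_Ioc hp a).measure_set_eq (isAddFundamentalDomain_Ioc hp b) hA ?_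
  rintro ⟨_, k, rfl⟩
  ext θ
  simpa [add_comm] using hper.int_mul k θ

theorem volume_Ico_two_mul_inter_of_periodic {p : ℝ} (hp : 0 < p) {A : Set ℝ}
    (hA : MeasurableSet A) (hper : Function.Periodic (· ∈ A) p) (a b : ℝ) :
    volume (Ico a (a + 2 * p) ∩ A) = 2 * volume (Ico b (b + p) ∩ A) := by
  have hsplit : Ico a (a + 2 * p) = Ico a (a + p) ∪ Ico (a + p) (a + p + p) := by
    rw [Ico_union_Ico_eq_Ico (by linarith) (by linarith), add_assoc, ← two_mul]
  rw [hsplit, union_inter_distrib_right, measure_union _ (measurableSet_Ico.inter hA),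
    volume_Ico_inter_eq_of_periodic hp hA hper a b,
    volume_Ico_inter_eq_of_periodic hp hA hper (a + p) b, two_mul]
  exact (Ico_disjoint_Ico_same.mono inter_subset_left inter_subset_left)

theorem sqrt_two_div_two_lt_abs_cos_iff (u : ℝ) : √2 / 2 < |cos u| ↔ 0 < cos (2 * u) := by
  rw [← abs_of_pos (by positivity : 0 < √2 / 2), ← sq_lt_sq, div_pow, sq_sqrt zero_le_two,
    cos_two_mul]
  constructor <;> intro h <;> linarith

theorem cos_two_mul_pos_iff_of_abs_le {u : ℝ} (hu : |u| ≤ 3 * π / 4) :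
    0 < cos (2 * u) ↔ |u| < π / 4 := by
  rw [← cos_abs, abs_mul, abs_two]
  constructor
  · intro h
    by_contra! h'
    exact h.not_ge (cos_nonpos_of_pi_div_two_le_of_le (by linarith) (by linarith))
  · intro h
    exact cos_pos_of_mem_Ioo ⟨by linarith [abs_nonneg u, pi_pos], by linarith⟩

theorem arccos_abs_cos_of_abs_sub_int_mul_le {x : ℝ} {k : ℤ} (hk : |x - k * π| ≤ π / 2) :
    arccos |cos x| = |x - k * π| := by
  have hcos : 0 ≤ cos (x - k * π) := cos_nonneg_of_mem_Icc (abs_le.1 hk)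
  rw [show x = (x - k * π) + k * π by ring, cos_add_int_mul_pi, abs_mul, abs_neg_one_zpow,
    one_mul, abs_of_nonneg hcos, ← cos_abs, arccos_cos (abs_nonneg _) (by linarith [pi_pos]),
    add_sub_cancel_right]

-- On this window both `θ - α` and `θ - β` stay within `3π/4` of `0`.
theorem Ico_inter_cos_two_mul_pos {α β : ℝ} (h : |β - α| ≤ π / 2) :
    Ico ((α + β) / 2 - π / 2) ((α + β) / 2 - π / 2 + π) ∩
        {θ | 0 < cos (2 * (θ - α)) ∧ 0 < cos (2 * (θ - β))} =
      {θ | |θ - α| < π / 4 ∧ |θ - β| < π / 4} := by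
  obtain ⟨h₁, h₂⟩ := abs_le.1 h
  ext θ
  simp only [mem_inter_iff, mem_Ico, mem_ofPred_eq]
  constructor
  · rintro ⟨⟨hθ₁, hθ₂⟩, hα, hβ⟩
    rw [cos_two_mul_pos_iff_of_abs_le (abs_le.2 ⟨by linarith, by linarith⟩)] at hα hβ
    exact ⟨hα, hβ⟩
  · rintro ⟨hα, hβ⟩
    obtain ⟨hα₁, hα₂⟩ := abs_lt.1 hα
    obtain ⟨hβ₁, hβ₂⟩ := abs_lt.1 hβ
    refine ⟨⟨by linarith, by linarith⟩, ?_, ?_⟩ <;>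
      rw [cos_two_mul_pos_iff_of_abs_le (abs_le.2 ⟨by linarith, by linarith⟩)] <;> assumption

theorem volume_Ico_inter_cos_two_mul_pos (α β : ℝ) :
    volume (Ico 0 (2 * π) ∩ {θ | 0 < cos (2 * (θ - α)) ∧ 0 < cos (2 * (θ - β))}) =
      ENNReal.ofReal (π - 2 * arccos |cos (β - α)|) := by
  obtain ⟨k, hk⟩ := exists_abs_sub_int_mul_le_half (β - α) pi_pos
  set β₀ := β - k * π
  have hβ₀ : β₀ - α = β - α - k * π := by ring
  have hA : {θ | 0 < cos (2 * (θ - α)) ∧ 0 < cos (2 * (θ - β))} =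
      {θ | 0 < cos (2 * (θ - α)) ∧ 0 < cos (2 * (θ - β₀))} := by
    ext θ
    simp only [mem_ofPred_eq]
    rw [show 2 * (θ - β₀) = 2 * (θ - β) + k * (2 * π) by ring, cos_add_int_mul_two_pi]
  set A := {θ | 0 < cos (2 * (θ - α)) ∧ 0 < cos (2 * (θ - β₀))}
  have hA_meas : MeasurableSet A := by
    simp only [A, ofPred_and]
    exact (measurableSet_lt measurable_const (by fun_prop)).inter
      (measurableSet_lt measurable_const (by fun_prop))
  have hA_per : Function.Periodic (· ∈ A) π := fun θ ↦ by
    have h2π : ∀ γ, 2 * (θ + π - γ) = 2 * (θ - γ) + 2 * π := fun γ ↦ by ring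
    simp only [A, mem_ofPred_eq, h2π, cos_add_two_pi]
  rw [hA, show Ico 0 (2 * π) = Ico 0 (0 + 2 * π) by rw [zero_add],
    volume_Ico_two_mul_inter_of_periodic pi_pos hA_meas hA_per 0 _,
    Ico_inter_cos_two_mul_pos (hβ₀ ▸ hk), volume_inter_abs_sub_lt,
    arccos_abs_cos_of_abs_sub_int_mul_le hk, ← hβ₀, abs_sub_comm, ← ENNReal.ofReal_ofNat 2,
    ← ENNReal.ofReal_mul zero_le_two]
  congr 1
  ring

noncomputable def unitVec (θ : ℝ) : ℝ² := WithLp.toLp 2 ![cos θ, sin θ]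

theorem continuous_unitVec : Continuous unitVec := by
  unfold unitVec; fun_prop

theorem inner_unitVec (α θ : ℝ) : ⟪unitVec α, unitVec θ⟫ = cos (θ - α) := by
  simp [unitVec, PiLp.inner_apply, Fin.sum_univ_two, cos_sub]

theorem exists_eq_unitVec {y : ℝ²} (hy : ‖y‖ = 1) : ∃ α, y = unitVec α := by
  set z : ℂ := ⟨y 0, y 1⟩
  have hz : ‖z‖ = 1 := by
    rw [← hy, EuclideanSpace.norm_eq, Complex.norm_def, Complex.normSq_mk, Fin.sum_univ_two]
    simp [sq]
  refine ⟨z.arg, ?_⟩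
  ext i
  fin_cases i
  · simpa [unitVec, hz] using (Complex.norm_mul_cos_arg z).symm
  · simpa [unitVec, hz] using (Complex.norm_mul_sin_arg z).symm

theorem circleUnif_apply {s : Set ℝ²} (hs : MeasurableSet s) :
    circleUnif s = ENNReal.ofReal (2 * π)⁻¹ * volume (Ico 0 (2 * π) ∩ unitVec ⁻¹' s) := by
  rw [show circleUnif = Measure.map unitVec _ from rfl,
    Measure.map_apply continuous_unitVec.measurable hs, Measure.smul_apply,
    Measure.restrict_apply (continuous_unitVec.measurable hs), smul_eq_mul, inter_comm]

instance : IsProbabilityMeasure circleUnif := by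
  constructor
  rw [circleUnif_apply MeasurableSet.univ, preimage_univ, inter_univ, Real.volume_Ico, sub_zero,
    ← ENNReal.ofReal_mul (by positivity), inv_mul_cancel₀ (by positivity), ENNReal.ofReal_one]

theorem isOpen_setOf_mem_quad : IsOpen {p : ℝ² × ℝ² | p.2 ∈ quad p.1} :=
  isOpen_lt continuous_const (by fun_prop : Continuous fun p : ℝ² × ℝ² ↦ |⟪p.1, p.2⟫|)

theorem isOpen_quad (x : ℝ²) : IsOpen (quad x) :=
  isOpen_setOf_mem_quad.preimage (Continuous.prodMk_right x)

theorem mem_quad_comm {x w : ℝ²} : w ∈ quad x ↔ x ∈ quad w := by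
  simp only [quad, mem_ofPred_eq, real_inner_comm]

theorem circleUnif_quad_inter {y z : ℝ²} (hy : ‖y‖ = 1) (hz : ‖z‖ = 1) :
    circleUnif (quad y ∩ quad z) = ENNReal.ofReal (1 / 2 - arccos |⟪y, z⟫| / π) := by
  obtain ⟨α, rfl⟩ := exists_eq_unitVec hy
  obtain ⟨β, rfl⟩ := exists_eq_unitVec hz
  have hpre : unitVec ⁻¹' (quad (unitVec α) ∩ quad (unitVec β)) =
      {θ | 0 < cos (2 * (θ - α)) ∧ 0 < cos (2 * (θ - β))} := by
    ext θ
    simp only [quad, mem_preimage, mem_inter_iff, mem_ofPred_eq, gt_iff_lt, inner_unitVec,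
      sqrt_two_div_two_lt_abs_cos_iff]
  rw [circleUnif_apply ((isOpen_quad _).inter (isOpen_quad _)).measurableSet, hpre,
    volume_Ico_inter_cos_two_mul_pos, inner_unitVec, ← ENNReal.ofReal_mul (by positivity)]
  congr 1
  field_simp

theorem circleUnif_quad {y : ℝ²} (hy : ‖y‖ = 1) :
    circleUnif (quad y) = ENNReal.ofReal (1 / 2) := by
  rw [← inter_self (quad y), circleUnif_quad_inter hy hy, real_inner_self_eq_norm_sq, hy]
  simp

theorem lintegral_measure_quad_comm (ν μ : Measure ℝ²) [SFinite ν] [SFinite μ] :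
    ∫⁻ x, μ (quad x) ∂ν = ∫⁻ y, ν (quad y) ∂μ :=
  (lintegral_measure_prodMk_preimage_comm isOpen_setOf_mem_quad.measurableSet ν μ).trans
    (lintegral_congr fun _ ↦ congrArg ν (ext fun _ ↦ mem_quad_comm))

theorem lintegral_measure_quad_sq (ν μ : Measure ℝ²) [SFinite ν] [SFinite μ] :
    ∫⁻ x, μ (quad x) ^ 2 ∂ν = ∫⁻ p, ν (quad p.1 ∩ quad p.2) ∂μ.prod μ :=
  (lintegral_measure_prodMk_preimage_sq isOpen_setOf_mem_quad.measurableSet ν μ).trans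
    (lintegral_congr fun _ ↦ congrArg ν (ext fun _ ↦ and_congr mem_quad_comm mem_quad_comm))

theorem toReal_lintegral_half_sub_arccos_div_pi (μ : Measure ℝ²) [IsProbabilityMeasure μ] :
    (∫⁻ p, ENNReal.ofReal (1 / 2 - arccos |⟪p.1, p.2⟫| / π) ∂μ.prod μ).toReal =
      1 / 2 - (1 / π) * ∫ y, ∫ z, arccos |⟪y, z⟫| ∂μ ∂μ := by
  have harccos_int : Integrable (fun p : ℝ² × ℝ² ↦ arccos |⟪p.1, p.2⟫|) (μ.prod μ) :=
    .of_bound (by fun_prop : Continuous _).aestronglyMeasurable π (ae_of_all _ fun p ↦ by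
      rw [norm_of_nonneg (arccos_nonneg _)]; exact arccos_le_pi _)
  have hnonneg : ∀ p : ℝ² × ℝ², 0 ≤ 1 / 2 - arccos |⟪p.1, p.2⟫| / π := fun p ↦ by
    rw [sub_nonneg, div_le_iff₀ pi_pos]
    linarith [arccos_le_pi_div_two.2 (abs_nonneg ⟪p.1, p.2⟫)]
  rw [← integral_eq_lintegral_of_nonneg_ae (ae_of_all _ hnonneg)
      (by fun_prop : Continuous _).aestronglyMeasurable,
    integral_sub (integrable_const _) (harccos_int.div_const π),
    integral_div π (fun p : ℝ² × ℝ² ↦ arccos |⟪p.1, p.2⟫|),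
    integral_prod _ harccos_int,
    integral_const, probReal_univ, one_smul]
  ring

theorem stmt_13 (μ : Measure (EuclideanSpace ℝ (Fin 2))) (hμ : IsProbabilityMeasure μ)
    (hsupp : μ (Metric.sphere (0 : EuclideanSpace ℝ (Fin 2)) 1)ᶜ = 0) :
    ∫ x, ((μ (quad x)).toReal - 1 / 2) ^ 2 ∂circleUnif =
      1 / 4 - (1 / Real.pi) * ∫ y, ∫ z, Real.arccos |⟪y, z⟫| ∂μ ∂μ := by
  have hsphere : ∀ᵐ w ∂μ, ‖w‖ = 1 := by
    filter_upwards [mem_ae_iff.2 hsupp] with w hw using mem_sphere_zero_iff_norm.1 hw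
  have hsphere₂ : ∀ᵐ p ∂μ.prod μ, ‖p.1‖ = 1 ∧ ‖p.2‖ = 1 :=
    (Measure.quasiMeasurePreserving_fst.ae hsphere).and
      (Measure.quasiMeasurePreserving_snd.ae hsphere)
  have hmean : ∫⁻ x, μ (quad x) ∂circleUnif = ENNReal.ofReal (1 / 2) := by
    rw [lintegral_measure_quad_comm, lintegral_congr_ae (hsphere.mono fun _ ↦ circleUnif_quad)]
    simp
  have hsq : ∫⁻ x, μ (quad x) ^ 2 ∂circleUnif =
      ∫⁻ p, ENNReal.ofReal (1 / 2 - arccos |⟪p.1, p.2⟫| / π) ∂μ.prod μ := by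
    rw [lintegral_measure_quad_sq]
    exact lintegral_congr_ae (hsphere₂.mono fun p hp ↦ circleUnif_quad_inter hp.1 hp.2)
  rw [integral_toReal_sub_sq (f := fun x ↦ μ (quad x))
      (measurable_measure_prodMk_left isOpen_setOf_mem_quad.measurableSet) (fun _ ↦ prob_le_one),
    hmean, hsq, toReal_lintegral_half_sub_arccos_div_pi, ENNReal.toReal_ofReal (by norm_num)]
  ring
end
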